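/- Let V: ℝⁿ × [0,T] → ℝ be continuously differentiable and a classical solution of the HJB equation −∂V/∂t = f·∇ₓV − ½|g(x)ᵀ∇ₓV|². Let u: [t,T] → ℝᵐ be continuous and let x: [t,T] → ℝⁿ be differentiable with x′(s) = f(x(s)) + g(x(s))u(s) for all s. Then V(x(t),t) ≤ ½∫ₜᵀ |u(s)|² ds + V(x(T),T). -/

import Mathlib

/-! The time derivative of `s ↦ V(x(s), s)` along a controlled trajectory is
`∇ₓV·(f + g u) + ∂ₜV`. By the HJB equation this equals `(gᵀ∇ₓV)·u + ½|gᵀ∇ₓV|²`, which is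
`½|gᵀ∇ₓV + u|² - ½|u|² ≥ -½|u|²`. Integrating this bound from `t` to `T` gives the claim; the
one-sided fundamental theorem of calculus suffices, so the derivative along the trajectory need
not be continuous or even integrable. -/

open Matrix

/-- The continuous linear map `(v, τ) ↦ a ⬝ᵥ v + b * τ`, representing the total
derivative of a function `V(x,t)` with spatial gradient `a` and time derivative `b`. -/
noncomputable def pairDerivCLM {n : ℕ} (a : Fin n → ℝ) (b : ℝ) :
    ((Fin n → ℝ) × ℝ) →L[ℝ] ℝ :=
  LinearMap.toContinuousLinearMap
    { toFun := fun vτ => a ⬝ᵥ vτ.1 + b * vτ.2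
      map_add' := by intro v w; simp [dotProduct_add]; ring
      map_smul' := by intro c v; simp [dotProduct_smul]; ring }

@[simp]
lemma pairDerivCLM_apply {n : ℕ} (a : Fin n → ℝ) (b : ℝ) (vτ : (Fin n → ℝ) × ℝ) :
    pairDerivCLM a b vτ = a ⬝ᵥ vτ.1 + b * vτ.2 :=
  rfl

lemma HasFDerivAt.hasDerivAt_comp_graph {n : ℕ} {V : (Fin n → ℝ) → ℝ → ℝ} {a : Fin n → ℝ}
    {b : ℝ} {x : ℝ → Fin n → ℝ} {v : Fin n → ℝ} {s : ℝ}
    (hV : HasFDerivAt (fun p : (Fin n → ℝ) × ℝ => V p.1 p.2) (pairDerivCLM a b) (x s, s))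
    (hx : HasDerivAt x v s) :
    HasDerivAt (fun s => V (x s) s) (a ⬝ᵥ v + b) s :=
  (hV.comp_hasDerivAt_of_eq s (hx.prodMk (hasDerivAt_id s)) rfl).congr_deriv
    (by rw [pairDerivCLM_apply, mul_one])

/-- The HJB Hamiltonian `H(p) = F·p - ½|Gᵀp|²` is the minimum over controls `w` of
`p·(F + G w) + ½|w|²`; this is the inequality half. -/
lemma hamiltonian_le_dotProduct_add_half_dotProduct_self {ι κ : Type*} [Fintype ι] [Fintype κ]
    (F p : ι → ℝ) (G : Matrix ι κ ℝ) (w : κ → ℝ) :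
    F ⬝ᵥ p - 1 / 2 * ((Gᵀ *ᵥ p) ⬝ᵥ (Gᵀ *ᵥ p)) ≤ p ⬝ᵥ (F + G *ᵥ w) + 1 / 2 * (w ⬝ᵥ w) := by
  have hsplit : p ⬝ᵥ (F + G *ᵥ w) = F ⬝ᵥ p + (Gᵀ *ᵥ p) ⬝ᵥ w := by
    rw [dotProduct_add, dotProduct_comm p F, dotProduct_mulVec, mulVec_transpose]
  have hsquare := dotProduct_self_star_nonneg (Gᵀ *ᵥ p + w)
  simp only [star_trivial, add_dotProduct, dotProduct_add, dotProduct_comm w] at hsquare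
  rw [hsplit]
  linarith

theorem hjb_verification_inequality_general
    (n m : ℕ) (T t : ℝ) (ht : 0 ≤ t) (hT : t < T)
    (f : (Fin n → ℝ) → (Fin n → ℝ)) (g : (Fin n → ℝ) → Matrix (Fin n) (Fin m) ℝ)
    (V Vt : (Fin n → ℝ) → ℝ → ℝ) (gradV : (Fin n → ℝ) → ℝ → (Fin n → ℝ))
    -- `V` is differentiable with spatial gradient `gradV` and time derivative `Vt` ...
    (hV : ∀ (x : Fin n → ℝ), ∀ s ∈ Set.Icc (0 : ℝ) T,
      HasFDerivAt (fun p : (Fin n → ℝ) × ℝ => V p.1 p.2)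
        (pairDerivCLM (gradV x s) (Vt x s)) (x, s))
    -- `V` is a classical solution of the HJB equation `-∂V/∂t = f·∇ₓV - ½|gᵀ∇ₓV|²`:
    (hHJB : ∀ (x : Fin n → ℝ), ∀ s ∈ Set.Icc (0 : ℝ) T,
      -(Vt x s) = f x ⬝ᵥ gradV x s
        - (1/2) * (((g x)ᵀ *ᵥ gradV x s) ⬝ᵥ ((g x)ᵀ *ᵥ gradV x s)))
    -- a continuous control and a corresponding trajectory:
    (u : ℝ → Fin m → ℝ) (hu : ContinuousOn u (Set.Icc t T))
    (x : ℝ → Fin n → ℝ)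
    (hx : ∀ s ∈ Set.Icc t T, HasDerivAt x (f (x s) + (g (x s)) *ᵥ u s) s) :
    V (x t) t ≤ (1/2) * (∫ s in t..T, u s ⬝ᵥ u s) + V (x T) T := by
  have hsub : Set.Icc t T ⊆ Set.Icc 0 T := Set.Icc_subset_Icc_left ht
  have hderiv : ∀ s ∈ Set.Icc t T, HasDerivAt (fun s => V (x s) s)
      (gradV (x s) s ⬝ᵥ (f (x s) + g (x s) *ᵥ u s) + Vt (x s) s) s := fun s hs =>
    (hV (x s) s (hsub hs)).hasDerivAt_comp_graph (hx s hs)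
  have hcost : ∀ s ∈ Set.Icc t T, -(1 / 2 * (u s ⬝ᵥ u s)) ≤
      gradV (x s) s ⬝ᵥ (f (x s) + g (x s) *ᵥ u s) + Vt (x s) s := fun s hs => by
    have := hamiltonian_le_dotProduct_add_half_dotProduct_self (f (x s)) (gradV (x s) s)
      (g (x s)) (u s)
    linarith [hHJB (x s) s (hsub hs)]
  have hcost_int :
      MeasureTheory.IntegrableOn (fun s => -(1 / 2 * (u s ⬝ᵥ u s))) (Set.Icc t T) :=
    (((continuous_id.dotProduct continuous_id).comp_continuousOn hu).const_smul
      (1 / 2 : ℝ)).neg.integrableOn_Icc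
  have hint : ∫ s in t..T, -(1 / 2 * (u s ⬝ᵥ u s)) ≤ V (x T) T - V (x t) t :=
    intervalIntegral.integral_le_sub_of_hasDeriv_right_of_le hT.le
      (fun s hs => (hderiv s hs).continuousAt.continuousWithinAt)
      (fun s hs => (hderiv s (Set.Ioo_subset_Icc_self hs)).hasDerivWithinAt)
      hcost_int (fun s hs => hcost s (Set.Ioo_subset_Icc_self hs))
  rw [intervalIntegral.integral_neg, intervalIntegral.integral_const_mul] at hint
  linarith

/-- Along a solution of the control system `x' = f(x) + g(x)u`, a classical solution `V`
of the HJB equation `-∂V/∂t = f·∇ₓV - ½|gᵀ∇ₓV|²` satisfies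
`V(x(t),t) ≤ ½∫ₜᵀ |u(s)|² ds + V(x(T),T)`. -/
theorem hjb_verification_inequality
    (n m : ℕ) (T t : ℝ) (ht : 0 ≤ t) (hT : t < T)
    (f : (Fin n → ℝ) → (Fin n → ℝ)) (g : (Fin n → ℝ) → Matrix (Fin n) (Fin m) ℝ)
    (hf : Continuous f) (hg : Continuous g)
    (V Vt : (Fin n → ℝ) → ℝ → ℝ) (gradV : (Fin n → ℝ) → ℝ → (Fin n → ℝ))
    -- `V` is differentiable with spatial gradient `gradV` and time derivative `Vt` ...
    (hV : ∀ (x : Fin n → ℝ), ∀ s ∈ Set.Icc (0 : ℝ) T,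
      HasFDerivAt (fun p : (Fin n → ℝ) × ℝ => V p.1 p.2)
        (pairDerivCLM (gradV x s) (Vt x s)) (x, s))
    -- ... and continuously so:
    (hC1 : ContinuousOn (fun p : (Fin n → ℝ) × ℝ => (gradV p.1 p.2, Vt p.1 p.2))
      ((Set.univ : Set (Fin n → ℝ)) ×ˢ Set.Icc (0 : ℝ) T))
    -- `V` is a classical solution of the HJB equation `-∂V/∂t = f·∇ₓV - ½|gᵀ∇ₓV|²`:
    (hHJB : ∀ (x : Fin n → ℝ), ∀ s ∈ Set.Icc (0 : ℝ) T,
      -(Vt x s) = f x ⬝ᵥ gradV x s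
        - (1/2) * (((g x)ᵀ *ᵥ gradV x s) ⬝ᵥ ((g x)ᵀ *ᵥ gradV x s)))
    -- a continuous control and a corresponding trajectory:
    (u : ℝ → Fin m → ℝ) (hu : ContinuousOn u (Set.Icc t T))
    (x : ℝ → Fin n → ℝ)
    (hx : ∀ s ∈ Set.Icc t T, HasDerivAt x (f (x s) + (g (x s)) *ᵥ u s) s) :
    V (x t) t ≤ (1/2) * (∫ s in t..T, u s ⬝ᵥ u s) + V (x T) T :=
  hjb_verification_inequality_general n m T t ht hT f g V Vt gradV hV hHJB u hu x hx
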